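/- arXiv:math/0506591 — 4 statements merged into one kernel-verified Lean document; each statement's English description precedes it below -/
import Mathlib

section
/- Let I be a countable set. Suppose f_N, f : I → ℝ satisfy f_N(i) → f(i) for every i ∈ I and sup_N Σ_{i∈I} |f_N(i)| < ∞; suppose u_N, v_N : I → [0,1] satisfy u_N(i) ≤ v_N(i) for all i and N, and u_N(i) → u(i) and v_N(i) → v(i) for every i ∈ I, where u, v : I → [0,1]; and suppose Σ_{i∈I} |f_N(i)v_N(i) − f(i)v(i)| → 0 as N → ∞. Then Σ_{i∈I} |f_N(i)u_N(i) − f(i)u(i)| → 0 as N → ∞. -/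
/-!
Write `a_N = |f_N u_N - f u|`, `b_N = |f_N v_N - f v|` and `g = 2 |f v|`. Since `0 ≤ u_N ≤ v_N`
and `0 ≤ u ≤ v`, the triangle inequality gives `a_N ≤ b_N + g`, hence `a_N ≤ b_N + min a_N g`.
The sums of `b_N` tend to `0` by hypothesis, and `min a_N g → 0` pointwise under the summable
dominant `g` (summable because `f ∈ ℓ¹` by Fatou), so Tannery's theorem finishes the proof.
-/

open Filter Topology

lemma summable_of_tendsto_of_tsum_le {α ι : Type*} {l : Filter α} [l.NeBot]
    {a : α → ι → ℝ} {b : ι → ℝ} {C : ℝ} (ha0 : ∀ n i, 0 ≤ a n i)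
    (hab : ∀ i, Tendsto (a · i) l (𝓝 (b i))) (ha : ∀ n, Summable (a n))
    (hC : ∀ n, ∑' i, a n i ≤ C) : Summable b := by
  refine summable_of_sum_le (c := C) (fun i => ge_of_tendsto' (hab i) (ha0 · i)) fun s => ?_
  refine le_of_tendsto' (tendsto_finsetSum s fun i _ => hab i) fun n => ?_
  exact ((ha n).sum_le_tsum s fun i _ => ha0 n i).trans (hC n)

lemma tendsto_tsum_zero_of_le_add {α ι : Type*} {l : Filter α} {a b : α → ι → ℝ} {g : ι → ℝ}
    (ha0 : ∀ n i, 0 ≤ a n i) (ha : ∀ i, Tendsto (a · i) l (𝓝 0))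
    (hb0 : ∀ n i, 0 ≤ b n i) (hb : ∀ n, Summable (b n))
    (hbl : Tendsto (fun n => ∑' i, b n i) l (𝓝 0))
    (hg0 : ∀ i, 0 ≤ g i) (hg : Summable g) (hle : ∀ n i, a n i ≤ b n i + g i) :
    Tendsto (fun n => ∑' i, a n i) l (𝓝 0) := by
  have hmin_le : ∀ n i, min (a n i) (g i) ≤ g i := fun n i => min_le_right _ _
  have hmin_summable : ∀ n, Summable fun i => min (a n i) (g i) := fun n =>
    hg.of_nonneg_of_le (fun i => le_min (ha0 n i) (hg0 i)) (hmin_le n)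
  have hmin : Tendsto (fun n => ∑' i, min (a n i) (g i)) l (𝓝 0) := by
    have := tendsto_tsum_of_dominated_convergence hg
      (fun i => (ha i).min tendsto_const_nhds)
      (Eventually.of_forall fun n i => by
        rw [Real.norm_of_nonneg (le_min (ha0 n i) (hg0 i))]
        exact hmin_le n i)
    simpa [min_eq_left (hg0 _)] using this
  have hle_min : ∀ n i, a n i ≤ b n i + min (a n i) (g i) := fun n i =>
    sub_le_iff_le_add'.mp (le_min (by linarith [hb0 n i]) (by linarith [hle n i]))
  refine tendsto_of_tendsto_of_tendsto_of_le_of_le tendsto_const_nhds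
    (by simpa using hbl.add hmin) (fun n => tsum_nonneg (ha0 n)) fun n => ?_
  have hsum := (hb n).add (hmin_summable n)
  calc ∑' i, a n i ≤ ∑' i, (b n i + min (a n i) (g i)) :=
        (hsum.of_nonneg_of_le (ha0 n) (hle_min n)).tsum_le_tsum (hle_min n) hsum
    _ = ∑' i, b n i + ∑' i, min (a n i) (g i) := (hb n).tsum_add (hmin_summable n)

lemma abs_mul_le_abs_of_mem_Icc {x v : ℝ} (hv : v ∈ Set.Icc (0 : ℝ) 1) : |x * v| ≤ |x| := by
  rw [abs_mul, abs_of_nonneg hv.1]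
  exact mul_le_of_le_one_right (abs_nonneg x) hv.2

lemma abs_mul_sub_mul_le_abs_add_abs {x y v w : ℝ} (hv : v ∈ Set.Icc (0 : ℝ) 1)
    (hw : w ∈ Set.Icc (0 : ℝ) 1) : |x * v - y * w| ≤ |x| + |y| :=
  (abs_sub _ _).trans (add_le_add (abs_mul_le_abs_of_mem_Icc hv) (abs_mul_le_abs_of_mem_Icc hw))

lemma abs_mul_sub_mul_le_of_le {x y u v u' v' : ℝ} (hu : 0 ≤ u) (huv : u ≤ v)
    (hu' : 0 ≤ u') (huv' : u' ≤ v') :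
    |x * u - y * u'| ≤ |x * v - y * v'| + 2 * |y * v'| := by
  have hxu : |x * u| ≤ |x * v| := by
    rw [abs_mul, abs_mul, abs_of_nonneg hu, abs_of_nonneg (hu.trans huv)]
    exact mul_le_mul_of_nonneg_left huv (abs_nonneg x)
  have hyu : |y * u'| ≤ |y * v'| := by
    rw [abs_mul, abs_mul, abs_of_nonneg hu', abs_of_nonneg (hu'.trans huv')]
    exact mul_le_mul_of_nonneg_left huv' (abs_nonneg y)
  linarith [abs_sub (x * u) (y * u'), abs_sub_abs_le_abs_sub (x * v) (y * v')]

theorem stmt_1_general {I : Type*}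
    (f : ℕ → I → ℝ) (flim : I → ℝ)
    (hfconv : ∀ i, Tendsto (fun N => f N i) atTop (nhds (flim i)))
    (hfl1 : ∀ N, Summable fun i => |f N i|)
    (hbdd : ∃ C : ℝ, ∀ N, ∑' i, |f N i| ≤ C)
    (u v : ℕ → I → ℝ) (ulim vlim : I → ℝ)
    (hu01 : ∀ N i, u N i ∈ Set.Icc (0 : ℝ) 1)
    (hv01 : ∀ N i, v N i ∈ Set.Icc (0 : ℝ) 1)
    (hulim01 : ∀ i, ulim i ∈ Set.Icc (0 : ℝ) 1)
    (hvlim01 : ∀ i, vlim i ∈ Set.Icc (0 : ℝ) 1)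
    (huv : ∀ N i, u N i ≤ v N i)
    (huconv : ∀ i, Tendsto (fun N => u N i) atTop (nhds (ulim i)))
    (hvconv : ∀ i, Tendsto (fun N => v N i) atTop (nhds (vlim i)))
    (hfv : Tendsto (fun N => ∑' i, |f N i * v N i - flim i * vlim i|) atTop (nhds 0)) :
    Tendsto (fun N => ∑' i, |f N i * u N i - flim i * ulim i|) atTop (nhds 0) := by
  obtain ⟨C, hC⟩ := hbdd
  have hflim : Summable fun i => |flim i| := summable_of_tendsto_of_tsum_le
    (fun _ _ => abs_nonneg _) (fun i => (hfconv i).abs) hfl1 hC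
  have hulim_le : ∀ i, ulim i ≤ vlim i := fun i =>
    le_of_tendsto_of_tendsto' (huconv i) (hvconv i) (huv · i)
  refine tendsto_tsum_zero_of_le_add (g := fun i => 2 * |flim i * vlim i|)
    (fun _ _ => abs_nonneg _) (fun i => ?_) (fun _ _ => abs_nonneg _) (fun N => ?_) hfv
    (fun _ => by positivity) ?_ (fun N i => ?_)
  · simpa using (((hfconv i).mul (huconv i)).sub_const (flim i * ulim i)).abs
  · exact ((hfl1 N).add hflim).of_nonneg_of_le (fun _ => abs_nonneg _) fun i =>
      abs_mul_sub_mul_le_abs_add_abs (hv01 N i) (hvlim01 i)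
  · exact (hflim.mul_left 2).of_nonneg_of_le (fun _ => by positivity) fun i =>
      mul_le_mul_of_nonneg_left (abs_mul_le_abs_of_mem_Icc (hvlim01 i)) zero_le_two
  · exact abs_mul_sub_mul_le_of_le (hu01 N i).1 (huv N i) (hulim01 i).1 (hulim_le i)

/-- if `f N → f` pointwise with uniformly bounded ℓ¹ norms, `u N ≤ v N` are
`[0,1]`-valued with `u N → u`, `v N → v` pointwise, and `f N * v N → f * v` in ℓ¹, then
`f N * u N → f * u` in ℓ¹. -/
theorem stmt_1 {I : Type*} [Countable I]
    (f : ℕ → I → ℝ) (flim : I → ℝ)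
    (hfconv : ∀ i, Tendsto (fun N => f N i) atTop (nhds (flim i)))
    (hfl1 : ∀ N, Summable fun i => |f N i|)
    (hbdd : ∃ C : ℝ, ∀ N, ∑' i, |f N i| ≤ C)
    (u v : ℕ → I → ℝ) (ulim vlim : I → ℝ)
    (hu01 : ∀ N i, u N i ∈ Set.Icc (0 : ℝ) 1)
    (hv01 : ∀ N i, v N i ∈ Set.Icc (0 : ℝ) 1)
    (hulim01 : ∀ i, ulim i ∈ Set.Icc (0 : ℝ) 1)
    (hvlim01 : ∀ i, vlim i ∈ Set.Icc (0 : ℝ) 1)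
    (huv : ∀ N i, u N i ≤ v N i)
    (huconv : ∀ i, Tendsto (fun N => u N i) atTop (nhds (ulim i)))
    (hvconv : ∀ i, Tendsto (fun N => v N i) atTop (nhds (vlim i)))
    (hfv : Tendsto (fun N => ∑' i, |f N i * v N i - flim i * vlim i|) atTop (nhds 0)) :
    Tendsto (fun N => ∑' i, |f N i * u N i - flim i * ulim i|) atTop (nhds 0) :=
  stmt_1_general f flim hfconv hfl1 hbdd u v ulim vlim hu01 hv01 hulim01 hvlim01 huv huconv hvconv
    hfv
end

section
/- Let d ≥ 1 and let p : ℤ^d → [0,1] be a probability distribution (Σ_y p(y) = 1) with finite support and p(0) = 0. For each N ∈ ℕ let δ_N : P_F → ℝ satisfy Σ_{A∈P_F} |δ_N(A)| < ∞, and assume: (i) for every N and every ξ : ℤ^d → {0,1} with ξ(0) = 1, one has Σ_{A∈P_F} δ_N(A) ∏_{a∈A} ξ(a) ≥ −N Σ_{y∈ℤ^d} p(y)(1 − ξ(y)); and (ii) sup_N Σ_{A∈P_F} δ_N(A)⁻ < ∞, where x⁻ = max(−x, 0). Then there exists a constant k_δ > 0 such that for all N and all ξ : ℤ^d → {0,1}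 with ξ(0) = 1, Σ_{A∈P_F} δ_N(A) ∏_{a∈A} ξ(a) ≥ −k_δ Σ_{y∈ℤ^d} p(y)(1 − ξ(y)). -/
/-!
If `ξ` vanishes somewhere on the finite support of `p`, then `∑ p y (1 - ξ y)` is at least the
smallest positive value `ε` of `p`, while the `δ`-sum is at least `-C`, the uniform bound on the
negative parts; so any `k ≥ C / ε` works. Otherwise `∑ p y (1 - ξ y) = 0`, and the death-rate
hypothesis already gives the claim, with the factor `N` multiplying zero.
-/

open Filter Topology

section

variable {α ι : Type*}

theorem neg_tsum_negPart_le_tsum_mul {f w : ι → ℝ} (hf : Summable fun i => |f i|)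
    (hw0 : ∀ i, 0 ≤ w i) (hw1 : ∀ i, w i ≤ 1) :
    -∑' i, max (-f i) 0 ≤ ∑' i, f i * w i := by
  have hneg : Summable fun i => max (-f i) 0 :=
    hf.of_nonneg_of_le (fun _ => le_max_right _ _) fun i => max_le (neg_le_abs _) (abs_nonneg _)
  have hmul : Summable fun i => f i * w i :=
    hf.of_norm_bounded fun i => by
      rw [Real.norm_eq_abs, abs_mul, abs_of_nonneg (hw0 i)]
      exact mul_le_of_le_one_right (abs_nonneg _) (hw1 i)
  rw [← tsum_neg]
  refine hneg.neg.tsum_le_tsum (fun i => ?_) hmul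
  rcases le_total 0 (f i) with hfi | hfi
  · simpa [max_eq_right (neg_nonpos.2 hfi)] using mul_nonneg hfi (hw0 i)
  · simpa [max_eq_left (neg_nonneg.2 hfi)] using mul_le_mul_of_nonpos_left (hw1 i) hfi

theorem exists_pos_forall_le_of_support_finite {p : α → ℝ} (hp0 : ∀ y, 0 ≤ p y)
    (hpfin : p.support.Finite) : ∃ ε > 0, ∀ y ∈ p.support, ε ≤ p y :=
  ((eventually_mem_nhdsWithin (a := 0) (s := Set.Ioi 0)).and <|
    hpfin.eventually_all.2 fun y hy =>
      nhdsWithin_le_nhds <| eventually_le_nhds ((hp0 y).lt_of_ne' hy)).exists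

theorem exists_pos_forall_tsum_mul_one_sub_eq_zero_or_le {p : α → ℝ} (hp0 : ∀ y, 0 ≤ p y)
    (hpfin : p.support.Finite) :
    ∃ ε > 0, ∀ ξ : α → ℝ, (∀ x, ξ x = 0 ∨ ξ x = 1) →
      ∑' y, p y * (1 - ξ y) = 0 ∨ ε ≤ ∑' y, p y * (1 - ξ y) := by
  obtain ⟨ε, hε, hεp⟩ := exists_pos_forall_le_of_support_finite hp0 hpfin
  refine ⟨ε, hε, fun ξ hξ => ?_⟩
  by_cases hvanish : ∃ y ∈ p.support, ξ y = 0
  · obtain ⟨y, hy, hξy⟩ := hvanish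
    have hsum : Summable fun y => p y * (1 - ξ y) :=
      summable_of_hasFiniteSupport <| hpfin.subset <| Function.support_mul_subset_left _ _
    have hterm_nonneg : ∀ z, 0 ≤ p z * (1 - ξ z) := fun z =>
      mul_nonneg (hp0 z) (by rcases hξ z with h | h <;> simp [h])
    right
    calc ε ≤ p y * (1 - ξ y) := by simpa [hξy] using hεp y hy
      _ ≤ ∑' z, p z * (1 - ξ z) := hsum.le_tsum y fun z _ => hterm_nonneg z
  · push Not at hvanish
    have hterm_zero : ∀ y, p y * (1 - ξ y) = 0 := fun y => by
      by_cases hy : p y = 0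
      · simp [hy]
      · simp [(hξ y).resolve_left (hvanish y hy)]
    simp [hterm_zero]

end

theorem stmt_2_general (d : ℕ)
    (p : (Fin d → ℤ) → ℝ)
    (hp0 : ∀ y, 0 ≤ p y)
    (hpfin : (Function.support p).Finite)
    (δ : ℕ → Finset (Fin d → ℤ) → ℝ)
    (hδsum : ∀ N, Summable fun A => |δ N A|)
    (hrate : ∀ N : ℕ, ∀ ξ : (Fin d → ℤ) → ℝ, (∀ x, ξ x = 0 ∨ ξ x = 1) → ξ 0 = 1 →
      -((N : ℝ) * ∑' y, p y * (1 - ξ y)) ≤ ∑' A, δ N A * ∏ a ∈ A, ξ a)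
    (hneg : ∃ C : ℝ, ∀ N, ∑' A, max (-(δ N A)) 0 ≤ C) :
    ∃ k : ℝ, 0 < k ∧ ∀ N : ℕ, ∀ ξ : (Fin d → ℤ) → ℝ, (∀ x, ξ x = 0 ∨ ξ x = 1) → ξ 0 = 1 →
      -(k * ∑' y, p y * (1 - ξ y)) ≤ ∑' A, δ N A * ∏ a ∈ A, ξ a := by
  obtain ⟨C, hC⟩ := hneg
  obtain ⟨ε, hε, hgap⟩ := exists_pos_forall_tsum_mul_one_sub_eq_zero_or_le hp0 hpfin
  refine ⟨max (C / ε) 1, by positivity, fun N ξ hξ hξ0 => ?_⟩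
  rcases hgap ξ hξ with hT | hT
  · simpa [hT] using hrate N ξ hξ hξ0
  have hξ_nonneg : ∀ x, 0 ≤ ξ x := fun x => by rcases hξ x with h | h <;> simp [h]
  have hξ_le_one : ∀ x, ξ x ≤ 1 := fun x => by rcases hξ x with h | h <;> simp [h]
  calc -(max (C / ε) 1 * ∑' y, p y * (1 - ξ y)) ≤ -(C / ε * ε) :=
        neg_le_neg <| mul_le_mul (le_max_left _ _) hT hε.le (by positivity)
    _ = -C := by rw [div_mul_cancel₀ _ hε.ne']
    _ ≤ -∑' A, max (-(δ N A)) 0 := neg_le_neg (hC N)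
    _ ≤ ∑' A, δ N A * ∏ a ∈ A, ξ a :=
        neg_tsum_negPart_le_tsum_mul (hδsum N) (fun A => Finset.prod_nonneg fun a _ => hξ_nonneg a)
          fun A => Finset.prod_le_one (fun a _ => hξ_nonneg a) fun a _ => hξ_le_one a

/-- Lemma 1.7: for a finite-range probability kernel `p` on `ℤ^d` with
`p 0 = 0`, if the perturbation rates `δ N` give nonnegative death rates
(hypothesis `hrate`) and have uniformly bounded negative parts, then condition (P4)
holds: there is a single constant `k > 0` working for all `N`. -/
theorem stmt_2 (d : ℕ) (hd : 1 ≤ d)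
    (p : (Fin d → ℤ) → ℝ)
    (hp0 : ∀ y, 0 ≤ p y) (hp1 : ∀ y, p y ≤ 1)
    (hpsum : HasSum p 1)
    (hpfin : (Function.support p).Finite)
    (hpzero : p 0 = 0)
    (δ : ℕ → Finset (Fin d → ℤ) → ℝ)
    (hδsum : ∀ N, Summable fun A => |δ N A|)
    (hrate : ∀ N : ℕ, ∀ ξ : (Fin d → ℤ) → ℝ, (∀ x, ξ x = 0 ∨ ξ x = 1) → ξ 0 = 1 →
      -((N : ℝ) * ∑' y, p y * (1 - ξ y)) ≤ ∑' A, δ N A * ∏ a ∈ A, ξ a)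
    (hneg : ∃ C : ℝ, ∀ N, ∑' A, max (-(δ N A)) 0 ≤ C) :
    ∃ k : ℝ, 0 < k ∧ ∀ N : ℕ, ∀ ξ : (Fin d → ℤ) → ℝ, (∀ x, ξ x = 0 ∨ ξ x = 1) → ξ 0 = 1 →
      -(k * ∑' y, p y * (1 - ξ y)) ≤ ∑' A, δ N A * ∏ a ∈ A, ξ a :=
  stmt_2_general d p hp0 hpfin δ hδsum hrate hneg
end

section
/- Let d ≥ 1 and let β, δ : P_F → ℝ satisfy β(∅) = 0 and C := Σ_{A∈P_F} (|β(A)| + |δ(A)|) < ∞. Let ξ : ℤ^d → {0,1} have finite support and set |ξ| = Σ_{x∈ℤ^d} ξ(x), and let φ : ℤ^d → ℝ be bounded with ‖φ‖_∞ = sup_x |φ(x)|. Then Σ_{x∈ℤ^d} Σ_{A∈P_F} |φ(x)| χ(A, x, ξ) ( |β(A)| · 1{ξ(x)=0} + |δ(A)| · 1{ξ(x)=1} ) ≤ ‖φ‖_∞ · C · |ξ|. -/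
open scoped Classical

/-- inequality (2.11): the combined bound on the perturbation part of the
predictable square function. Here `χ(A, x, ξ) = ∏_{a∈A} ξ(x+a)`, `‖φ‖_∞ = ⨆ x, |φ x|`,
`C = Σ_A (|β A| + |δ A|)` and `|ξ| = Σ_x ξ x`. -/
theorem stmt_3 (d : ℕ) (hd : 1 ≤ d)
    (β δ : Finset (Fin d → ℤ) → ℝ)
    (hβempty : β ∅ = 0)
    (hsum : Summable fun A => |β A| + |δ A|)
    (ξ : (Fin d → ℤ) → ℝ) (hξ : ∀ x, ξ x = 0 ∨ ξ x = 1)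
    (hfin : (Function.support ξ).Finite)
    (φ : (Fin d → ℤ) → ℝ)
    (hφ : BddAbove (Set.range fun x => |φ x|)) :
    ∑' x : Fin d → ℤ, ∑' A : Finset (Fin d → ℤ),
        |φ x| * (∏ a ∈ A, ξ (x + a)) *
          ((if ξ x = 0 then |β A| else 0) + (if ξ x = 1 then |δ A| else 0))
      ≤ (⨆ x, |φ x|) * (∑' A : Finset (Fin d → ℤ), (|β A| + |δ A|)) * ∑' x, ξ x := by
  classical
  set M : ℝ := ⨆ x, |φ x| with hMdef
  have hφM : ∀ x, |φ x| ≤ M := fun x => le_ciSup hφ x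
  have hM0 : 0 ≤ M := le_trans (abs_nonneg (φ 0)) (hφM 0)
  have hξ0 : ∀ x, 0 ≤ ξ x := fun x => by rcases hξ x with h | h <;> simp [h]
  have hξ1 : ∀ x, ξ x ≤ 1 := fun x => by rcases hξ x with h | h <;> simp [h]
  have hξsum : Summable ξ := summable_of_finite_support hfin
  set S : ℝ := ∑' x, ξ x with hSdef
  -- the summand
  set f : Finset (Fin d → ℤ) → (Fin d → ℤ) → ℝ := fun A x =>
    |φ x| * (∏ a ∈ A, ξ (x + a)) *
      ((if ξ x = 0 then |β A| else 0) + (if ξ x = 1 then |δ A| else 0)) with hfdef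
  have hf0 : ∀ A x, 0 ≤ f A x := by
    intro A x
    have h1 : 0 ≤ ∏ a ∈ A, ξ (x + a) := Finset.prod_nonneg fun a _ => hξ0 _
    have h2 : (0:ℝ) ≤ (if ξ x = 0 then |β A| else 0) + (if ξ x = 1 then |δ A| else 0) := by
      apply add_nonneg <;> split <;> simp [abs_nonneg]
    exact mul_nonneg (mul_nonneg (abs_nonneg _) h1) h2
  have hχ0 : ∀ (A : Finset (Fin d → ℤ)) x, 0 ≤ ∏ a ∈ A, ξ (x + a) :=
    fun A x => Finset.prod_nonneg fun a _ => hξ0 _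
  have hχ1 : ∀ (A : Finset (Fin d → ℤ)) x, ∏ a ∈ A, ξ (x + a) ≤ 1 :=
    fun A x => Finset.prod_le_one (fun a _ => hξ0 _) (fun a _ => hξ1 _)
  -- choice of a point in A
  set a₀ : Finset (Fin d → ℤ) → (Fin d → ℤ) := fun A =>
    if h : A.Nonempty then h.choose else 0 with ha₀def
  have ha₀mem : ∀ A : Finset (Fin d → ℤ), A.Nonempty → a₀ A ∈ A := by
    intro A h
    simp only [ha₀def, dif_pos h]
    exact h.choose_spec
  have hχle : ∀ (A : Finset (Fin d → ℤ)) x, A.Nonempty →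
      ∏ a ∈ A, ξ (x + a) ≤ ξ (x + a₀ A) := by
    intro A x hA
    calc ∏ a ∈ A, ξ (x + a)
        = ξ (x + a₀ A) * ∏ a ∈ A.erase (a₀ A), ξ (x + a) :=
          (Finset.mul_prod_erase A _ (ha₀mem A hA)).symm
      _ ≤ ξ (x + a₀ A) * 1 := by
          apply mul_le_mul_of_nonneg_left _ (hξ0 _)
          exact Finset.prod_le_one (fun a _ => hξ0 _) (fun a _ => hξ1 _)
      _ = ξ (x + a₀ A) := mul_one _
  -- the majorant
  set g : Finset (Fin d → ℤ) → (Fin d → ℤ) → ℝ := fun A x =>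
    M * (|β A| * ξ (x + a₀ A) + |δ A| * ξ x) with hgdef
  have key : ∀ A x, f A x ≤ g A x := by
    intro A x
    rcases hξ x with hx | hx
    · simp only [hfdef, hgdef, hx, if_pos rfl, if_neg (by norm_num : (0:ℝ) ≠ 1),
        add_zero, mul_zero]
      rcases A.eq_empty_or_nonempty with rfl | hA
      · simp [hβempty]
      · have h1 : |φ x| * (∏ a ∈ A, ξ (x + a)) * |β A|
            ≤ M * ξ (x + a₀ A) * |β A| := by
          apply mul_le_mul_of_nonneg_right _ (abs_nonneg _)
          exact mul_le_mul (hφM x) (hχle A x hA) (hχ0 A x) hM0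
        calc |φ x| * (∏ a ∈ A, ξ (x + a)) * |β A| ≤ M * ξ (x + a₀ A) * |β A| := h1
          _ = M * (|β A| * ξ (x + a₀ A)) := by ring
    · simp only [hfdef, hgdef, hx, if_neg (by norm_num : (1:ℝ) ≠ 0), if_pos rfl,
        zero_add, mul_one]
      have h1 : |φ x| * (∏ a ∈ A, ξ (x + a)) * |δ A| ≤ M * 1 * |δ A| := by
        apply mul_le_mul_of_nonneg_right _ (abs_nonneg _)
        exact mul_le_mul (hφM x) (hχ1 A x) (hχ0 A x) hM0
      have h2 : (0:ℝ) ≤ M * (|β A| * ξ (x + a₀ A)) :=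
        mul_nonneg hM0 (mul_nonneg (abs_nonneg _) (hξ0 _))
      calc |φ x| * (∏ a ∈ A, ξ (x + a)) * |δ A| ≤ M * 1 * |δ A| := h1
        _ = M * |δ A| := by ring
        _ ≤ M * (|β A| * ξ (x + a₀ A) + |δ A|) := by nlinarith
  -- summability of translated ξ
  have hξtrans : ∀ a : Fin d → ℤ, Summable fun x => ξ (x + a) :=
    fun a => (Equiv.addRight a).summable_iff.mpr hξsum
  have hξtrans_tsum : ∀ a : Fin d → ℤ, (∑' x, ξ (x + a)) = S :=
    fun a => (Equiv.addRight a).tsum_eq ξ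
  have hg_sum : ∀ A, Summable (g A) := by
    intro A
    exact (((hξtrans (a₀ A)).mul_left _).add (hξsum.mul_left _)).mul_left M
  have hg_tsum : ∀ A, (∑' x, g A x) = M * (|β A| + |δ A|) * S := by
    intro A
    rw [hgdef]
    simp only
    rw [tsum_mul_left, Summable.tsum_add ((hξtrans (a₀ A)).mul_left _) (hξsum.mul_left _),
      tsum_mul_left, tsum_mul_left, hξtrans_tsum]
    ring
  have hfA_sum : ∀ A, Summable (f A) :=
    fun A => Summable.of_nonneg_of_le (hf0 A) (key A) (hg_sum A)
  have hfA_le : ∀ A, (∑' x, f A x) ≤ M * (|β A| + |δ A|) * S := by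
    intro A
    calc (∑' x, f A x) ≤ ∑' x, g A x := Summable.tsum_le_tsum (key A) (hfA_sum A) (hg_sum A)
      _ = M * (|β A| + |δ A|) * S := hg_tsum A
  have hS0 : 0 ≤ S := tsum_nonneg hξ0
  have hbound_sum : Summable fun A => M * (|β A| + |δ A|) * S :=
    (hsum.mul_left M).mul_right S
  have hcol_sum : Summable fun A => ∑' x, f A x :=
    Summable.of_nonneg_of_le (fun A => tsum_nonneg (hf0 A)) hfA_le hbound_sum
  have hprod : Summable (Function.uncurry f) :=
    (summable_prod_of_nonneg (fun p => hf0 p.1 p.2)).2 ⟨fun A => hfA_sum A, hcol_sum⟩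
  have hxfib : ∀ x, Summable fun A => f A x := by
    intro x
    apply Summable.of_nonneg_of_le (fun A => hf0 A x) _ (hsum.mul_left M)
    intro A
    have h2 : (if ξ x = 0 then |β A| else 0) + (if ξ x = 1 then |δ A| else 0)
        ≤ |β A| + |δ A| := by
      apply add_le_add <;> split <;> simp [abs_nonneg]
    have hind0 : (0:ℝ) ≤ (if ξ x = 0 then |β A| else 0) + (if ξ x = 1 then |δ A| else 0) := by
      apply add_nonneg <;> split <;> simp [abs_nonneg]
    have hb : |φ x| * (∏ a ∈ A, ξ (x + a)) ≤ M := by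
      calc |φ x| * (∏ a ∈ A, ξ (x + a)) ≤ M * 1 :=
            mul_le_mul (hφM x) (hχ1 A x) (hχ0 A x) hM0
        _ = M := mul_one M
    exact mul_le_mul hb h2 hind0 hM0
  have hswap : (∑' x, ∑' A, f A x) = ∑' A, ∑' x, f A x :=
    Summable.tsum_comm' hprod hfA_sum hxfib
  show (∑' x, ∑' A, f A x) ≤ M * (∑' A, (|β A| + |δ A|)) * S
  rw [hswap]
  calc (∑' A, ∑' x, f A x) ≤ ∑' A, M * (|β A| + |δ A|) * S :=
        Summable.tsum_le_tsum hfA_le hcol_sum hbound_sum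
    _ = M * (∑' A, (|β A| + |δ A|)) * S := by
        rw [tsum_mul_right, tsum_mul_left]
end

section
/- Let d ≥ 1 and let q : ℤ^d → [0,1] be a probability distribution with q(0) = 0. Let β, δ : P_F → ℝ satisfy: β(∅) = 0; β(A) = δ(A) = 0 whenever 0 ∈ A; Σ_{A∈P_F}(|β(A)| + |δ(A)|) < ∞; c_β := Σ_{A∈P_F} β(A)⁺ > 0; and there are constants k > 0 and N ≥ k such that for every ξ : ℤ^d → {0,1} and every x with ξ(x) = 1, Σ_{A∈P_F} δ(A) χ(A, x, ξ) ≥ −k Σ_{y} q(y − x)(1 − ξ(y)). For ξ : ℤ^d → {0,1} define f₁(x,ξ) = Σ_y q(y−x)ξ(y), f₀(x,ξ) = Σ_y q(y−x)(1−ξ(y)), and the flip rate c(x, ξ) = N Σ_y q(y−x) 1{ξ(y) ≠ ξ(x)} + Σ_{A∈P_F} χ(A, x, ξ)( β(A) 1{ξ(x)=0} + δ(A) 1{ξ(x)=1} ). Define the probability distribution q̂(a) = c_β^{-1} Σ_{A∈P_F : a∈A} β(A)⁺/|A|, let q̄ = ( k q + c_β q̂ )/(k + c_β), set f̄₁(x,ξ)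 = Σ_y q̄(y−x)ξ(y), and define the biased voter rate c̄(x, ξ) = (N − k) f₁(x, ξ) + (k + c_β) f̄₁(x, ξ) if ξ(x) = 0, and c̄(x, ξ) = (N − k) f₀(x, ξ) if ξ(x) = 1. Then for all configurations ξ ≤ ξ̄ (pointwise) and all x ∈ ℤ^d: (a) if ξ(x) = ξ̄(x) = 0 then c(x, ξ) ≤ c̄(x, ξ̄); (b) if ξ(x) = ξ̄(x) = 1 then c(x, ξ) ≥ c̄(x, ξ̄). -/
open scoped Classical

noncomputable section

/-- `χ(A, x, ξ) = ∏_{a∈A} ξ(x+a)` (with `χ(∅,x,ξ) = 1`). -/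
def lvChi (d : ℕ) (A : Finset (Fin d → ℤ)) (x : Fin d → ℤ)
    (ξ : (Fin d → ℤ) → ℝ) : ℝ :=
  ∏ a ∈ A, ξ (x + a)

/-- Local density of ones: `f₁(x,ξ) = Σ_y r(y−x) ξ(y)` for a kernel `r`. -/
def lvF1 (d : ℕ) (r ξ : (Fin d → ℤ) → ℝ) (x : Fin d → ℤ) : ℝ :=
  ∑' y, r (y - x) * ξ y

/-- Local density of zeros: `f₀(x,ξ) = Σ_y r(y−x)(1 − ξ(y))`. -/
def lvF0 (d : ℕ) (r ξ : (Fin d → ℤ) → ℝ) (x : Fin d → ℤ) : ℝ :=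
  ∑' y, r (y - x) * (1 - ξ y)

/-- `c_β = Σ_A β(A)⁺`. -/
def lvCbeta (d : ℕ) (β : Finset (Fin d → ℤ) → ℝ) : ℝ :=
  ∑' A : Finset (Fin d → ℤ), max (β A) 0

/-- `q̂(a) = c_β⁻¹ Σ_{A ∋ a} β(A)⁺ / |A|`. -/
def lvQhat (d : ℕ) (β : Finset (Fin d → ℤ) → ℝ) (a : Fin d → ℤ) : ℝ :=
  (lvCbeta d β)⁻¹ *
    ∑' A : Finset (Fin d → ℤ), if a ∈ A then max (β A) 0 / (A.card : ℝ) else 0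

/-- `q̄ = (k q + c_β q̂)/(k + c_β)`. -/
def lvQbar (d : ℕ) (q : (Fin d → ℤ) → ℝ) (β : Finset (Fin d → ℤ) → ℝ) (k : ℝ)
    (a : Fin d → ℤ) : ℝ :=
  (k * q a + lvCbeta d β * lvQhat d β a) / (k + lvCbeta d β)

/-- The flip rate of the voter model perturbation:
`c(x,ξ) = N Σ_y q(y−x) 1{ξ(y)≠ξ(x)} + Σ_A χ(A,x,ξ)(β(A) 1{ξ(x)=0} + δ(A) 1{ξ(x)=1})`. -/
def lvRate (d : ℕ) (q : (Fin d → ℤ) → ℝ) (β δ : Finset (Fin d → ℤ) → ℝ)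
    (N : ℝ) (x : Fin d → ℤ) (ξ : (Fin d → ℤ) → ℝ) : ℝ :=
  N * (∑' y, q (y - x) * (if ξ y ≠ ξ x then (1 : ℝ) else 0)) +
    ∑' A : Finset (Fin d → ℤ),
      lvChi d A x ξ * ((if ξ x = 0 then β A else 0) + (if ξ x = 1 then δ A else 0))

/-- The flip rate of the dominating biased voter model:
`c̄(x,ξ) = (N−k) f₁ + (k+c_β) f̄₁` if `ξ(x) = 0`, and `(N−k) f₀` if `ξ(x) = 1`. -/
def lvBrate (d : ℕ) (q : (Fin d → ℤ) → ℝ) (β : Finset (Fin d → ℤ) → ℝ)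
    (N k : ℝ) (x : Fin d → ℤ) (ξ : (Fin d → ℤ) → ℝ) : ℝ :=
  if ξ x = 0 then
    (N - k) * lvF1 d q ξ x + (k + lvCbeta d β) * lvF1 d (lvQbar d q β k) ξ x
  else (N - k) * lvF0 d q ξ x

/-!
Since `(k + c_β) q̄ = k q + c_β q̂`, at a `0`-site `c̄ = N f₁ + c_β f₁(q̂, ·)`, while at a `1`-site
`c̄ = N f₀ - k f₀`; as `f₁` increases and `f₀` decreases from `ξ` to `ξ̄`, only the perturbation
terms need care. At a `0`-site, monotonicity of `χ` and the fact that a product of numbers in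
`[0,1]` is at most their mean give `Σ_A χ(A,x,ξ) β(A) ≤ Σ_A β(A)⁺ |A|⁻¹ Σ_{a∈A} ξ̄(x+a)`, which
after exchanging the two sums is `c_β f₁(q̂, ξ̄)(x)`. At a `1`-site, (P4) bounds the death term
below by `-k f₀`.
-/

section Spread

variable {α : Type*} [DecidableEq α]

theorem Finset.card_mul_prod_le_sum {s : Finset α} {w : α → ℝ}
    (hw : ∀ a ∈ s, w a ∈ Set.Icc (0 : ℝ) 1) : (s.card : ℝ) * ∏ a ∈ s, w a ≤ ∑ a ∈ s, w a := by
  rw [← nsmul_eq_mul, ← Finset.sum_const]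
  refine Finset.sum_le_sum fun a ha => ?_
  have hw' : ∀ b ∈ s.erase a, w b ∈ Set.Icc (0 : ℝ) 1 := fun b hb =>
    hw b (Finset.mem_of_mem_erase hb)
  rw [← Finset.mul_prod_erase s w ha]
  exact mul_le_of_le_one_right (hw a ha).1
    (Finset.prod_le_one (fun b hb => (hw' b hb).1) fun b hb => (hw' b hb).2)

-- `∑' A, spread (fun A => β(A)⁺) A a = c_β q̂(a)`
def spread (c : Finset α → ℝ) (A : Finset α) (a : α) : ℝ :=
  if a ∈ A then c A / A.card else 0

variable {c : Finset α → ℝ}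

theorem spread_nonneg (hc : ∀ A, 0 ≤ c A) (A : Finset α) (a : α) : 0 ≤ spread c A a := by
  unfold spread
  split_ifs
  exacts [div_nonneg (hc A) A.card.cast_nonneg, le_rfl]

theorem spread_eq_zero_of_notMem {A : Finset α} {a : α} (ha : a ∉ A) : spread c A a = 0 :=
  if_neg ha

theorem sum_spread_mul (A : Finset α) (w : α → ℝ) :
    ∑ a ∈ A, spread c A a * w a = c A / A.card * ∑ a ∈ A, w a := by
  rw [Finset.mul_sum]
  exact Finset.sum_congr rfl fun a ha => by rw [spread, if_pos ha]

theorem hasSum_spread (hc : c ∅ = 0) (A : Finset α) : HasSum (spread c A) (c A) := by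
  have h : HasSum (spread c A) (∑ a ∈ A, spread c A a) :=
    hasSum_sum_of_ne_finset_zero fun a ha => spread_eq_zero_of_notMem ha
  rcases A.eq_empty_or_nonempty with rfl | hA
  · simpa [hc] using h
  · convert h using 1
    have hsum := sum_spread_mul (c := c) A fun _ => 1
    simp only [mul_one, Finset.sum_const, nsmul_eq_mul] at hsum
    rw [hsum, div_mul_cancel₀ _ (Nat.cast_ne_zero.2 hA.card_pos.ne')]

theorem summable_uncurry_spread (hc : ∀ A, 0 ≤ c A) (hcs : Summable c) (hc' : c ∅ = 0) :
    Summable (Function.uncurry (spread c)) :=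
  (summable_prod_of_nonneg fun p => spread_nonneg hc p.1 p.2).2
    ⟨fun A => (hasSum_spread hc' A).summable, by
      simpa only [Function.uncurry_apply_pair, (hasSum_spread hc' _).tsum_eq] using hcs⟩

theorem mul_prod_le_tsum_spread_mul (hc : ∀ A, 0 ≤ c A) (hc' : c ∅ = 0) {w : α → ℝ}
    (hw : ∀ a, w a ∈ Set.Icc (0 : ℝ) 1) (A : Finset α) :
    c A * ∏ a ∈ A, w a ≤ ∑' a, spread c A a * w a := by
  rw [tsum_eq_sum fun a ha => by rw [spread_eq_zero_of_notMem ha, zero_mul], sum_spread_mul]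
  rcases A.eq_empty_or_nonempty with rfl | hA
  · simp [hc']
  · have hcard : (A.card : ℝ) ≠ 0 := Nat.cast_ne_zero.2 hA.card_pos.ne'
    calc c A * ∏ a ∈ A, w a = c A / A.card * (A.card * ∏ a ∈ A, w a) := by field_simp
      _ ≤ c A / A.card * ∑ a ∈ A, w a :=
        mul_le_mul_of_nonneg_left (Finset.card_mul_prod_le_sum fun a _ => hw a)
          (div_nonneg (hc A) A.card.cast_nonneg)

theorem tsum_mul_prod_le_tsum_spread_mul (hc : ∀ A, 0 ≤ c A) (hcs : Summable c) (hc' : c ∅ = 0)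
    {w : α → ℝ} (hw : ∀ a, w a ∈ Set.Icc (0 : ℝ) 1) :
    ∑' A, c A * ∏ a ∈ A, w a ≤ ∑' a, (∑' A, spread c A a) * w a := by
  have hF : Summable fun p : Finset α × α => spread c p.1 p.2 * w p.2 :=
    (summable_uncurry_spread hc hcs hc').of_nonneg_of_le
      (fun p => mul_nonneg (spread_nonneg hc _ _) (hw _).1)
      (fun p => mul_le_of_le_one_right (spread_nonneg hc _ _) (hw _).2)
  have hprod : Summable fun A => c A * ∏ a ∈ A, w a :=
    hcs.of_nonneg_of_le
      (fun A => mul_nonneg (hc A) (Finset.prod_nonneg fun a _ => (hw a).1))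
      (fun A => mul_le_of_le_one_right (hc A)
        (Finset.prod_le_one (fun a _ => (hw a).1) fun a _ => (hw a).2))
  calc ∑' A, c A * ∏ a ∈ A, w a ≤ ∑' A, ∑' a, spread c A a * w a :=
        hprod.tsum_le_tsum (mul_prod_le_tsum_spread_mul hc hc' hw) hF.prod
    _ = ∑' a, (∑' A, spread c A a) * w a := by
        rw [← hF.tsum_comm]
        simp_rw [tsum_mul_right]

end Spread

theorem summable_mul_of_mem_Icc {G : Type*} [AddGroup G] {r w : G → ℝ} (hr : Summable r)
    (hr0 : ∀ y, 0 ≤ r y) (hw : ∀ y, w y ∈ Set.Icc (0 : ℝ) 1) (x : G) :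
    Summable fun y => r (y - x) * w y :=
  ((Equiv.subRight x).summable_iff.2 hr).of_nonneg_of_le
    (fun y => mul_nonneg (hr0 _) (hw y).1) fun y => mul_le_of_le_one_right (hr0 _) (hw y).2

section Lattice

variable {d : ℕ} {q r : (Fin d → ℤ) → ℝ} {β δ : Finset (Fin d → ℤ) → ℝ} {k N : ℝ}
  {ξ ξ' : (Fin d → ℤ) → ℝ} {x : Fin d → ℤ}

theorem lvF1_mono (hr : Summable r) (hr0 : ∀ y, 0 ≤ r y) (hξ : ∀ y, ξ y ∈ Set.Icc (0 : ℝ) 1)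
    (hξ' : ∀ y, ξ' y ∈ Set.Icc (0 : ℝ) 1) (hle : ξ ≤ ξ') (x : Fin d → ℤ) :
    lvF1 d r ξ x ≤ lvF1 d r ξ' x :=
  (summable_mul_of_mem_Icc hr hr0 hξ x).tsum_le_tsum
    (fun y => mul_le_mul_of_nonneg_left (hle y) (hr0 _)) (summable_mul_of_mem_Icc hr hr0 hξ' x)

theorem lvF0_anti (hr : Summable r) (hr0 : ∀ y, 0 ≤ r y) (hξ : ∀ y, ξ y ∈ Set.Icc (0 : ℝ) 1)
    (hξ' : ∀ y, ξ' y ∈ Set.Icc (0 : ℝ) 1) (hle : ξ ≤ ξ') (x : Fin d → ℤ) :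
    lvF0 d r ξ' x ≤ lvF0 d r ξ x :=
  lvF1_mono (ξ := fun y => 1 - ξ' y) hr hr0
    (fun y => ⟨by linarith [(hξ' y).2], by linarith [(hξ' y).1]⟩)
    (fun y => ⟨by linarith [(hξ y).2], by linarith [(hξ y).1]⟩) (fun y => by linarith [hle y]) x

theorem lvCbeta_nonneg : 0 ≤ lvCbeta d β :=
  tsum_nonneg fun _ => le_max_right _ _

theorem lvQhat_nonneg (a : Fin d → ℤ) : 0 ≤ lvQhat d β a :=
  mul_nonneg (inv_nonneg.2 lvCbeta_nonneg)
    (tsum_nonneg fun A => spread_nonneg (c := fun A => max (β A) 0) (fun _ => le_max_right _ _) A a)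

theorem summable_lvQhat (hβ : Summable fun A => |β A|) (hβ' : β ∅ = 0) :
    Summable (lvQhat d β) :=
  ((summable_uncurry_spread (c := fun A => max (β A) 0) (fun _ => le_max_right _ _)
    (hβ.of_nonneg_of_le (fun _ => le_max_right _ _) fun _ => max_le (le_abs_self _) (abs_nonneg _))
    (by simp [hβ'])).prod_symm.prod.mul_left _)

theorem lvF1_lvQbar (hq : Summable q) (hq0 : ∀ y, 0 ≤ q y) (hqhat : Summable (lvQhat d β))
    (hξ : ∀ y, ξ y ∈ Set.Icc (0 : ℝ) 1) (hkc : k + lvCbeta d β ≠ 0) (x : Fin d → ℤ) :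
    (k + lvCbeta d β) * lvF1 d (lvQbar d q β k) ξ x =
      k * lvF1 d q ξ x + lvCbeta d β * lvF1 d (lvQhat d β) ξ x := by
  simp only [lvF1, ← tsum_mul_left]
  rw [← ((summable_mul_of_mem_Icc hq hq0 hξ x).mul_left k).tsum_add
    ((summable_mul_of_mem_Icc hqhat lvQhat_nonneg hξ x).mul_left _)]
  refine tsum_congr fun y => ?_
  rw [lvQbar, ← mul_assoc, mul_div_cancel₀ _ hkc]
  ring

theorem lvRate_of_eq_zero (hξ : ∀ y, ξ y = 0 ∨ ξ y = 1) (hx : ξ x = 0) :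
    lvRate d q β δ N x ξ = N * lvF1 d q ξ x + ∑' A, lvChi d A x ξ * β A := by
  have hflip : ∀ y, (if ξ y ≠ 0 then (1 : ℝ) else 0) = ξ y := fun y => by
    rcases hξ y with h | h <;> simp [h]
  simp only [lvRate, lvF1, hx, hflip]
  simp

theorem lvRate_of_eq_one (hξ : ∀ y, ξ y = 0 ∨ ξ y = 1) (hx : ξ x = 1) :
    lvRate d q β δ N x ξ = N * lvF0 d q ξ x + ∑' A, δ A * lvChi d A x ξ := by
  have hflip : ∀ y, (if ξ y ≠ 1 then (1 : ℝ) else 0) = 1 - ξ y := fun y => by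
    rcases hξ y with h | h <;> simp [h]
  simp only [lvRate, lvF0, hx, hflip]
  simp [mul_comm]

theorem tsum_lvChi_mul_le (hβ : Summable fun A => |β A|) (hβ' : β ∅ = 0)
    (hcβ : lvCbeta d β ≠ 0) (hξ : ∀ y, ξ y ∈ Set.Icc (0 : ℝ) 1)
    (hξ' : ∀ y, ξ' y ∈ Set.Icc (0 : ℝ) 1) (hle : ξ ≤ ξ') (x : Fin d → ℤ) :
    ∑' A, lvChi d A x ξ * β A ≤ lvCbeta d β * lvF1 d (lvQhat d β) ξ' x := by
  set c : Finset (Fin d → ℤ) → ℝ := fun A => max (β A) 0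
  have hc : ∀ A, 0 ≤ c A := fun _ => le_max_right _ _
  have hcs : Summable c :=
    hβ.of_nonneg_of_le hc fun _ => max_le (le_abs_self _) (abs_nonneg _)
  have hχ : ∀ A, lvChi d A x ξ ∈ Set.Icc (0 : ℝ) 1 := fun A =>
    ⟨Finset.prod_nonneg fun a _ => (hξ _).1,
      Finset.prod_le_one (fun a _ => (hξ _).1) fun a _ => (hξ _).2⟩
  have hχ' : ∀ A, lvChi d A x ξ' ≤ 1 := fun A =>
    Finset.prod_le_one (fun a _ => (hξ' _).1) fun a _ => (hξ' _).2
  have hchi_le : ∀ A, lvChi d A x ξ * β A ≤ c A * lvChi d A x ξ' := fun A =>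
    calc lvChi d A x ξ * β A ≤ lvChi d A x ξ * c A :=
          mul_le_mul_of_nonneg_left (le_max_left _ _) (hχ A).1
      _ ≤ lvChi d A x ξ' * c A := mul_le_mul_of_nonneg_right
          (Finset.prod_le_prod (fun a _ => (hξ _).1) fun a _ => hle _) (hc A)
      _ = c A * lvChi d A x ξ' := mul_comm _ _
  have hsummable : Summable fun A => lvChi d A x ξ * β A :=
    Summable.of_norm_bounded hβ fun A => by
      rw [Real.norm_eq_abs, abs_mul, abs_of_nonneg (hχ A).1]
      exact mul_le_of_le_one_left (abs_nonneg _) (hχ A).2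
  calc ∑' A, lvChi d A x ξ * β A ≤ ∑' A, c A * lvChi d A x ξ' :=
        hsummable.tsum_le_tsum hchi_le (hcs.of_nonneg_of_le
          (fun A => mul_nonneg (hc A) (Finset.prod_nonneg fun a _ => (hξ' _).1))
          fun A => mul_le_of_le_one_right (hc A) (hχ' A))
    _ ≤ ∑' a, (∑' A, spread c A a) * ξ' (x + a) :=
        tsum_mul_prod_le_tsum_spread_mul hc hcs (by simp [c, hβ']) fun a => hξ' (x + a)
    _ = lvCbeta d β * lvF1 d (lvQhat d β) ξ' x := by
        rw [lvF1, ← (Equiv.addLeft x).tsum_eq fun y => lvQhat d β (y - x) * ξ' y,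
          ← tsum_mul_left]
        refine tsum_congr fun a => ?_
        simp only [Equiv.coe_addLeft, add_sub_cancel_left, lvQhat, ← mul_assoc,
          mul_inv_cancel₀ hcβ, one_mul]
        rfl

end Lattice

theorem stmt_9_general (d : ℕ)
    (q : (Fin d → ℤ) → ℝ)
    (hq0 : ∀ y, 0 ≤ q y) (hqsum : HasSum q 1)
    (β δ : Finset (Fin d → ℤ) → ℝ)
    (hβempty : β ∅ = 0)
    (hsum : Summable fun A : Finset (Fin d → ℤ) => |β A| + |δ A|)
    (hcβ : 0 < lvCbeta d β)
    (k N : ℝ) (hk : 0 < k) (hkN : k ≤ N)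
    (hP4 : ∀ ξ : (Fin d → ℤ) → ℝ, (∀ x, ξ x = 0 ∨ ξ x = 1) → ∀ x, ξ x = 1 →
      -(k * lvF0 d q ξ x) ≤ ∑' A : Finset (Fin d → ℤ), δ A * lvChi d A x ξ) :
    ∀ ξ ξbar : (Fin d → ℤ) → ℝ,
      (∀ x, ξ x = 0 ∨ ξ x = 1) → (∀ x, ξbar x = 0 ∨ ξbar x = 1) →
      (∀ x, ξ x ≤ ξbar x) → ∀ x : Fin d → ℤ,
      (ξ x = 0 → ξbar x = 0 → lvRate d q β δ N x ξ ≤ lvBrate d q β N k x ξbar) ∧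
      (ξ x = 1 → ξbar x = 1 → lvBrate d q β N k x ξbar ≤ lvRate d q β δ N x ξ) := by
  intro ξ ξbar hb hbbar hle x
  have mem_Icc : ∀ {η : (Fin d → ℤ) → ℝ}, (∀ y, η y = 0 ∨ η y = 1) →
      ∀ y, η y ∈ Set.Icc (0 : ℝ) 1 :=
    fun hη y => by rcases hη y with h | h <;> simp [h]
  have hq := hqsum.summable
  have hβ : Summable fun A => |β A| :=
    hsum.of_nonneg_of_le (fun _ => abs_nonneg _) fun _ => le_add_of_nonneg_right (abs_nonneg _)
  constructor
  · intro hx hxbar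
    have hf₁ := lvF1_mono hq hq0 (mem_Icc hb) (mem_Icc hbbar) hle x
    have hbirth := tsum_lvChi_mul_le hβ hβempty hcβ.ne' (mem_Icc hb) (mem_Icc hbbar) hle x
    rw [lvRate_of_eq_zero hb hx, lvBrate, if_pos hxbar,
      lvF1_lvQbar hq hq0 (summable_lvQhat hβ hβempty) (mem_Icc hbbar) (by positivity) x]
    linarith [mul_le_mul_of_nonneg_left hf₁ (hk.le.trans hkN)]
  · intro hx hxbar
    have hf₀ := lvF0_anti hq hq0 (mem_Icc hb) (mem_Icc hbbar) hle x
    have hdeath := hP4 ξ hb x hx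
    rw [lvRate_of_eq_one hb hx, lvBrate, if_neg (by simp [hxbar])]
    linarith [mul_le_mul_of_nonneg_left hf₀ (sub_nonneg.2 hkN)]

/-- rate comparisons (4.8)–(4.13): under (P1), (P4), (P5) the rates of the
voter model perturbation are dominated by those of the biased voter model, in the sense
required for Liggett's coupling theorem. -/
theorem stmt_9 (d : ℕ) (hd : 1 ≤ d)
    (q : (Fin d → ℤ) → ℝ)
    (hq0 : ∀ y, 0 ≤ q y) (hq1 : ∀ y, q y ≤ 1) (hqsum : HasSum q 1) (hqzero : q 0 = 0)
    (β δ : Finset (Fin d → ℤ) → ℝ)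
    (hβempty : β ∅ = 0)
    (hzero : ∀ A : Finset (Fin d → ℤ), (0 : Fin d → ℤ) ∈ A → β A = 0 ∧ δ A = 0)
    (hsum : Summable fun A : Finset (Fin d → ℤ) => |β A| + |δ A|)
    (hcβ : 0 < lvCbeta d β)
    (k N : ℝ) (hk : 0 < k) (hkN : k ≤ N)
    (hP4 : ∀ ξ : (Fin d → ℤ) → ℝ, (∀ x, ξ x = 0 ∨ ξ x = 1) → ∀ x, ξ x = 1 →
      -(k * lvF0 d q ξ x) ≤ ∑' A : Finset (Fin d → ℤ), δ A * lvChi d A x ξ) :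
    ∀ ξ ξbar : (Fin d → ℤ) → ℝ,
      (∀ x, ξ x = 0 ∨ ξ x = 1) → (∀ x, ξbar x = 0 ∨ ξbar x = 1) →
      (∀ x, ξ x ≤ ξbar x) → ∀ x : Fin d → ℤ,
      (ξ x = 0 → ξbar x = 0 → lvRate d q β δ N x ξ ≤ lvBrate d q β N k x ξbar) ∧
      (ξ x = 1 → ξbar x = 1 → lvBrate d q β N k x ξbar ≤ lvRate d q β δ N x ξ) :=
  stmt_9_general d q hq0 hqsum β δ hβempty hsum hcβ k N hk hkN hP4

end
end
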